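/- For every pair of disjoint nonempty sets A, B ⊆ X there exist constants 0 < C₁ ≤ C₂ < ∞ (depending on X, H, A, B but not on β) such that for all β ∈ (0,∞): C₁ ≤ e^{βΦ(A,B)} · Z_β · CAP_β(A,B) ≤ C₂. -/

import Mathlib

open scoped Classical

variable {X : Type*}

/-- `ω` (restricted to 0,…,L) is a path of allowed moves from `a` to `b`. -/
def IsPathW (rel : X → X → Prop) (a b : X) (L : ℕ) (ω : ℕ → X) : Prop :=
  ω 0 = a ∧ ω L = b ∧ ∀ i < L, rel (ω i) (ω (i + 1))

/-- The maximal energy along the path `ω = (ω 0, …, ω L)`. -/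
noncomputable def pathMax (H : X → ℝ) (L : ℕ) (ω : ℕ → X) : ℝ :=
  (Finset.range (L + 1)).sup' Finset.nonempty_range_add_one fun i => H (ω i)

/-- Communication height Φ(a,b) between two configurations. -/
noncomputable def commH (rel : X → X → Prop) (H : X → ℝ) (a b : X) : ℝ :=
  sInf { m : ℝ | ∃ L ω, IsPathW rel a b L ω ∧ m = pathMax H L ω }

/-- Communication height Φ(A,B) between two sets of configurations. -/
noncomputable def commHS (rel : X → X → Prop) (H : X → ℝ) (A B : Set X) : ℝ :=
  sInf { m : ℝ | ∃ a ∈ A, ∃ b ∈ B, m = commH rel H a b }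

/-- The graph (X,∼) is connected. -/
def ConnGraph (rel : X → X → Prop) : Prop :=
  ∀ a b : X, ∃ L ω, IsPathW rel a b L ω

/-- Partition function Z_β. -/
noncomputable def Zb [Fintype X] (H : X → ℝ) (β : ℝ) : ℝ :=
  ∑ ξ : X, Real.exp (-β * H ξ)

/-- Gibbs measure μ_β. -/
noncomputable def gibbs [Fintype X] (H : X → ℝ) (β : ℝ) (η : X) : ℝ :=
  Real.exp (-β * H η) / Zb H β

/-- Metropolis transition rates c_β. -/
noncomputable def crate (rel : X → X → Prop) (H : X → ℝ) (β : ℝ) (η η' : X) : ℝ :=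
  if rel η η' then Real.exp (-β * max (H η' - H η) 0) else 0

/-- Dirichlet form E_β(h). -/
noncomputable def dirE [Fintype X] (rel : X → X → Prop) (H : X → ℝ) (β : ℝ)
    (h : X → ℝ) : ℝ :=
  (1 / 2) * ∑ η : X, ∑ η' : X, gibbs H β η * crate rel H β η η' * (h η - h η') ^ 2

/-- Capacity CAP_β(A,B). -/
noncomputable def capB [Fintype X] (rel : X → X → Prop) (H : X → ℝ) (β : ℝ)
    (A B : Set X) : ℝ :=
  sInf { e : ℝ | ∃ h : X → ℝ, (∀ η, 0 ≤ h η ∧ h η ≤ 1) ∧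
    (∀ η ∈ A, h η = 1) ∧ (∀ η ∈ B, h η = 0) ∧ e = dirE rel H β h }

/-! Since `Z_β μ_β(η) c_β(η,η') = e^{-β max(H η, H η')}` on every edge, `Z_β E_β(h)` is a sum of
`e^{-β max(H η, H η')} (h η - h η')²` over the edges. Lower bound: along an optimal path from `A`
to `B`, of length `L` and height `Φ(A,B)`, any admissible `h` drops by at least `1/L` across
some edge. Upper bound: the indicator of the configurations that cannot reach `B` below level
`Φ(A,B)` is admissible, and by symmetry of `∼` it jumps only across edges of energy at least
`Φ(A,B)`; there are at most `|X|²` of them. -/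

section Paths

variable {rel : X → X → Prop} {H : X → ℝ}

lemma IsPathW.length_ne_zero {a b : X} {L : ℕ} {ω : ℕ → X} (hp : IsPathW rel a b L ω)
    (hab : a ≠ b) : L ≠ 0 := by
  rintro rfl
  exact hab (hp.1.symm.trans hp.2.1)

lemma IsPathW.cons {a b c : X} {L : ℕ} {ω : ℕ → X} (hac : rel a c) (hp : IsPathW rel c b L ω) :
    IsPathW rel a b (L + 1) (Stream'.cons a ω) := by
  refine ⟨rfl, hp.2.1, fun i hi => ?_⟩
  cases i with
  | zero => exact show rel a (ω 0) from hp.1 ▸ hac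
  | succ j => exact hp.2.2 j (by omega)

lemma pathMax_mem_range (H : X → ℝ) (L : ℕ) (ω : ℕ → X) : pathMax H L ω ∈ Set.range H := by
  obtain ⟨i, -, h⟩ := Finset.exists_mem_eq_sup' Finset.nonempty_range_add_one fun i => H (ω i)
  exact ⟨ω i, h.symm⟩

lemma le_pathMax {L i : ℕ} {ω : ℕ → X} (hi : i ≤ L) : H (ω i) ≤ pathMax H L ω :=
  Finset.le_sup' (fun i => H (ω i)) (Finset.mem_range_succ_iff.2 hi)

lemma pathMax_lt_iff {L : ℕ} {ω : ℕ → X} {c : ℝ} : pathMax H L ω < c ↔ ∀ i ≤ L, H (ω i) < c := by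
  simp [pathMax, Finset.sup'_lt_iff]

lemma exists_isPathW_of_reflTransGen {P : X → Prop} {a b : X} (hb : P b)
    (h : Relation.ReflTransGen (fun x y => rel x y ∧ P x ∧ P y) a b) :
    ∃ L ω, IsPathW rel a b L ω ∧ ∀ i ≤ L, P (ω i) := by
  induction h using Relation.ReflTransGen.head_induction_on with
  | refl => exact ⟨0, fun _ => b, ⟨rfl, rfl, by simp⟩, fun _ _ => hb⟩
  | head hac _ ih =>
    obtain ⟨L, ω, hp, hP⟩ := ih
    refine ⟨L + 1, _, hp.cons hac.1, fun i hi => ?_⟩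
    cases i with
    | zero => exact hac.2.1
    | succ j => exact hP j (by omega)

end Paths

section CommunicationHeight

variable [Finite X] {rel : X → X → Prop} {H : X → ℝ}

lemma finite_pathMax_values (rel : X → X → Prop) (H : X → ℝ) (a b : X) :
    {m : ℝ | ∃ L ω, IsPathW rel a b L ω ∧ m = pathMax H L ω}.Finite :=
  (Set.finite_range H).subset <| by
    rintro m ⟨L, ω, -, rfl⟩
    exact pathMax_mem_range H L ω

lemma commH_le_pathMax {a b : X} {L : ℕ} {ω : ℕ → X} (hp : IsPathW rel a b L ω) :
    commH rel H a b ≤ pathMax H L ω :=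
  csInf_le (finite_pathMax_values rel H a b).bddBelow ⟨L, ω, hp, rfl⟩

lemma exists_isPathW_pathMax_eq_commH (hconn : ConnGraph rel) (a b : X) :
    ∃ L ω, IsPathW rel a b L ω ∧ pathMax H L ω = commH rel H a b := by
  obtain ⟨L, ω, hp⟩ := hconn a b
  obtain ⟨L', ω', hp', h⟩ :=
    Set.Nonempty.csInf_mem (by exact ⟨_, L, ω, hp, rfl⟩) (finite_pathMax_values rel H a b)
  exact ⟨L', ω', hp', h.symm⟩

lemma finite_commH_values (hconn : ConnGraph rel) (A B : Set X) :
    {m : ℝ | ∃ a ∈ A, ∃ b ∈ B, m = commH rel H a b}.Finite :=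
  (Set.finite_range H).subset <| by
    rintro m ⟨a, -, b, -, rfl⟩
    obtain ⟨L, ω, -, h⟩ := exists_isPathW_pathMax_eq_commH (H := H) hconn a b
    exact h ▸ pathMax_mem_range H L ω

lemma commHS_le_commH (hconn : ConnGraph rel) {A B : Set X} {a b : X} (ha : a ∈ A)
    (hb : b ∈ B) : commHS rel H A B ≤ commH rel H a b :=
  csInf_le (finite_commH_values hconn A B).bddBelow ⟨a, ha, b, hb, rfl⟩

lemma exists_isPathW_pathMax_eq_commHS (hconn : ConnGraph rel) {A B : Set X}
    (hA : A.Nonempty) (hB : B.Nonempty) :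
    ∃ a ∈ A, ∃ b ∈ B, ∃ L ω, IsPathW rel a b L ω ∧ pathMax H L ω = commHS rel H A B := by
  obtain ⟨a, ha, b, hb, h⟩ := Set.Nonempty.csInf_mem
    (by exact ⟨_, hA.some, hA.some_mem, hB.some, hB.some_mem, rfl⟩) (finite_commH_values hconn A B)
  obtain ⟨L, ω, hp, hL⟩ := exists_isPathW_pathMax_eq_commH (H := H) hconn a b
  exact ⟨a, ha, b, hb, L, ω, hp, by rw [hL, commHS, h]⟩

end CommunicationHeight

section TestFunction

variable {rel : X → X → Prop} {H : X → ℝ}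

lemma exists_admissible_jumps_above {c : ℝ} (hsymm : Symmetric rel) {A B : Set X}
    (hAB : Disjoint A B)
    (hc : ∀ a ∈ A, ∀ b ∈ B, ∀ L ω, IsPathW rel a b L ω → c ≤ pathMax H L ω) :
    ∃ h : X → ℝ, (∀ η, 0 ≤ h η ∧ h η ≤ 1) ∧ (∀ η ∈ A, h η = 1) ∧ (∀ η ∈ B, h η = 0) ∧
      ∀ η η', rel η η' → h η ≠ h η' → c ≤ max (H η) (H η') := by
  set low : X → X → Prop := fun x y => rel x y ∧ H x < c ∧ H y < c
  set S : Set X := {η | ∃ b ∈ B, Relation.ReflTransGen low η b}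
  have hSA : ∀ a ∈ A, a ∉ S := by
    rintro a ha ⟨b, hb, hab⟩
    rcases hab.cases_tail with rfl | ⟨d, -, -, -, hbc⟩
    · exact Set.disjoint_left.1 hAB ha hb
    obtain ⟨L, ω, hp, hlow⟩ := exists_isPathW_of_reflTransGen (P := (H · < c)) hbc hab
    exact (hc a ha b hb L ω hp).not_gt (pathMax_lt_iff.2 hlow)
  have hS : ∀ η η', rel η η' → max (H η) (H η') < c → (η ∈ S ↔ η' ∈ S) := by
    intro η η' hr hlt
    rw [max_lt_iff] at hlt
    exact ⟨fun ⟨b, hb, h⟩ => ⟨b, hb, .head ⟨hsymm hr, hlt.2, hlt.1⟩ h⟩,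
      fun ⟨b, hb, h⟩ => ⟨b, hb, .head ⟨hr, hlt⟩ h⟩⟩
  refine ⟨Sᶜ.indicator 1, fun η => ?_, fun a ha => ?_, fun b hb => ?_, fun η η' hr hne => ?_⟩
  · by_cases hη : η ∈ S <;> simp [hη]
  · simp [hSA a ha]
  · simpa using ⟨b, hb, .refl⟩
  · by_contra! hlt
    exact hne (by simp [Set.indicator, hS η η' hr hlt])

end TestFunction

lemma exists_div_le_sub_succ (f : ℕ → ℝ) {L : ℕ} (hL : L ≠ 0) :
    ∃ i < L, (f 0 - f L) / L ≤ f i - f (i + 1) := by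
  obtain ⟨i, hi, h⟩ := Finset.exists_le_of_sum_le (Finset.nonempty_range_iff.2 hL)
    (f := fun _ => (f 0 - f L) / L) (g := fun i => f i - f (i + 1)) <| by
      rw [Finset.sum_range_sub', Finset.sum_const, Finset.card_range, nsmul_eq_mul,
        mul_div_cancel₀ _ (Nat.cast_ne_zero.2 hL)]
  exact ⟨i, Finset.mem_range.1 hi, h⟩

section Energy

open Real

variable [Fintype X] {rel : X → X → Prop} {H : X → ℝ} {β : ℝ}

lemma Zb_pos [Nonempty X] : 0 < Zb H β :=
  Finset.sum_pos (fun _ _ => exp_pos _) Finset.univ_nonempty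

lemma dirE_nonneg (h : X → ℝ) : 0 ≤ dirE rel H β h := by
  unfold dirE gibbs crate Zb
  positivity

lemma Zb_mul_dirE [Nonempty X] (h : X → ℝ) :
    Zb H β * dirE rel H β h = 1 / 2 * ∑ η, ∑ η',
      if rel η η' then exp (-β * max (H η) (H η')) * (h η - h η') ^ 2 else 0 := by
  rw [dirE, mul_left_comm, Finset.mul_sum]
  congr 1
  refine Finset.sum_congr rfl fun η _ => ?_
  rw [Finset.mul_sum]
  refine Finset.sum_congr rfl fun η' _ => ?_
  have hZ : Zb H β ≠ 0 := Zb_pos.ne'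
  have hmax : H η + max (H η' - H η) 0 = max (H η) (H η') := by
    rw [← max_add_add_left, add_sub_cancel, add_zero, max_comm]
  unfold gibbs crate
  split_ifs
  · rw [← hmax, mul_add, exp_add]
    field_simp
  · simp

lemma exp_neg_mul_max_le_Zb_mul_dirE [Nonempty X] (h : X → ℝ) {η η' : X} (hr : rel η η') :
    exp (-β * max (H η) (H η')) * (h η - h η') ^ 2 / 2 ≤ Zb H β * dirE rel H β h := by
  have hterm : ∀ ξ ξ', 0 ≤
      if rel ξ ξ' then exp (-β * max (H ξ) (H ξ')) * (h ξ - h ξ') ^ 2 else 0 := by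
    intro ξ ξ'
    positivity
  rw [Zb_mul_dirE, div_eq_inv_mul, one_div]
  gcongr
  calc exp (-β * max (H η) (H η')) * (h η - h η') ^ 2
      = if rel η η' then exp (-β * max (H η) (H η')) * (h η - h η') ^ 2 else 0 := (if_pos hr).symm
    _ ≤ ∑ η'', if rel η η'' then exp (-β * max (H η) (H η'')) * (h η - h η'') ^ 2 else 0 :=
      Finset.single_le_sum (fun ξ' _ => hterm η ξ') (Finset.mem_univ η')
    _ ≤ _ := Finset.single_le_sum (fun ξ _ => Finset.sum_nonneg fun ξ' _ => hterm ξ ξ')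
      (Finset.mem_univ η)

lemma one_div_two_mul_sq_le_exp_mul_Zb_mul_dirE [Nonempty X] (hβ : 0 ≤ β) {a b : X} {L : ℕ}
    {ω : ℕ → X} (hp : IsPathW rel a b L ω) {h : X → ℝ} (ha : h a = 1) (hb : h b = 0) :
    1 / (2 * L ^ 2) ≤ exp (β * pathMax H L ω) * Zb H β * dirE rel H β h := by
  have hL : L ≠ 0 := hp.length_ne_zero (by rintro rfl; simp [ha] at hb)
  obtain ⟨i, hi, hdrop⟩ := exists_div_le_sub_succ (h ∘ ω) hL
  simp only [Function.comp, hp.1, hp.2.1, ha, hb, sub_zero] at hdrop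
  set d := h (ω i) - h (ω (i + 1))
  have hexp : 1 ≤ exp (β * pathMax H L ω) * exp (-β * max (H (ω i)) (H (ω (i + 1)))) := by
    have hedge : max (H (ω i)) (H (ω (i + 1))) ≤ pathMax H L ω :=
      max_le (le_pathMax hi.le) (le_pathMax hi)
    rw [← exp_add]
    exact one_le_exp (by nlinarith)
  have hsq : (1 / L : ℝ) ^ 2 ≤ d ^ 2 := pow_le_pow_left₀ (by positivity) hdrop 2
  calc 1 / (2 * L ^ 2 : ℝ) = (1 / L) ^ 2 / 2 := by ring
    _ ≤ exp (β * pathMax H L ω) * exp (-β * max (H (ω i)) (H (ω (i + 1)))) * d ^ 2 / 2 := by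
      gcongr
      exact hsq.trans (le_mul_of_one_le_left (sq_nonneg d) hexp)
    _ = exp (β * pathMax H L ω) * (exp (-β * max (H (ω i)) (H (ω (i + 1)))) * d ^ 2 / 2) := by
      ring
    _ ≤ exp (β * pathMax H L ω) * (Zb H β * dirE rel H β h) := by
      gcongr
      exact exp_neg_mul_max_le_Zb_mul_dirE h (hp.2.2 i hi)
    _ = _ := by ring

lemma exp_mul_Zb_mul_dirE_le [Nonempty X] (hβ : 0 ≤ β) {c : ℝ} {h : X → ℝ}
    (h01 : ∀ η, 0 ≤ h η ∧ h η ≤ 1)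
    (hjump : ∀ η η', rel η η' → h η ≠ h η' → c ≤ max (H η) (H η')) :
    exp (β * c) * Zb H β * dirE rel H β h ≤ Fintype.card X ^ 2 / 2 := by
  have hterm : ∀ η η', (if rel η η' then exp (-β * max (H η) (H η')) * (h η - h η') ^ 2
      else 0) ≤ exp (-β * c) := by
    intro η η'
    split_ifs with hr
    · by_cases heq : h η = h η'
      · simpa [heq] using (exp_pos _).le
      have hexp : exp (-β * max (H η) (H η')) ≤ exp (-β * c) :=
        exp_le_exp.2 (by nlinarith [hjump η η' hr heq])
      have hsq : (h η - h η') ^ 2 ≤ 1 := by nlinarith [h01 η, h01 η']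
      simpa using mul_le_mul hexp hsq (sq_nonneg _) (exp_pos _).le
    · exact (exp_pos _).le
  calc exp (β * c) * Zb H β * dirE rel H β h
      = exp (β * c) * (1 / 2 * ∑ η, ∑ η', if rel η η' then
          exp (-β * max (H η) (H η')) * (h η - h η') ^ 2 else 0) := by
        rw [mul_assoc, Zb_mul_dirE]
    _ ≤ exp (β * c) * (1 / 2 * ∑ _η : X, ∑ _η' : X, exp (-β * c)) := by
      gcongr with η _ η' _
      exact hterm η η'
    _ = Fintype.card X ^ 2 / 2 * (exp (β * c) * exp (-β * c)) := by
      simp only [Finset.sum_const, Finset.card_univ, nsmul_eq_mul]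
      ring
    _ = _ := by rw [← exp_add, neg_mul, add_neg_cancel, exp_zero, mul_one]

end Energy

section Capacity

variable [Fintype X] {rel : X → X → Prop} {H : X → ℝ} {β : ℝ} {A B : Set X}

lemma capB_le_dirE {h : X → ℝ} (h01 : ∀ η, 0 ≤ h η ∧ h η ≤ 1) (hA : ∀ η ∈ A, h η = 1)
    (hB : ∀ η ∈ B, h η = 0) : capB rel H β A B ≤ dirE rel H β h :=
  csInf_le ⟨0, by rintro _ ⟨g, -, -, -, rfl⟩; exact dirE_nonneg g⟩ ⟨h, h01, hA, hB, rfl⟩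

lemma le_mul_capB (hAB : Disjoint A B) {c K : ℝ} (hK : 0 < K)
    (hc : ∀ h : X → ℝ, (∀ η, 0 ≤ h η ∧ h η ≤ 1) → (∀ η ∈ A, h η = 1) → (∀ η ∈ B, h η = 0) →
      c ≤ K * dirE rel H β h) :
    c ≤ K * capB rel H β A B := by
  have hA01 : ∀ η, 0 ≤ A.indicator (1 : X → ℝ) η ∧ A.indicator (1 : X → ℝ) η ≤ 1 := fun η => by
    by_cases hη : η ∈ A <;> simp [hη]
  rw [← div_le_iff₀' hK]
  refine le_csInf ⟨_, A.indicator 1, hA01, fun η hη => by simp [hη],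
    fun η hη => by simp [Set.disjoint_right.1 hAB hη], rfl⟩ ?_
  rintro _ ⟨h, h01, hA, hB, rfl⟩
  exact (div_le_iff₀' hK).2 (hc h h01 hA hB)

end Capacity

/-- a priori estimates — for disjoint nonempty A,B ⊆ X there are
constants 0 < C₁ ≤ C₂ < ∞ with C₁ ≤ e^{βΦ(A,B)} Z_β CAP_β(A,B) ≤ C₂ for all β > 0. -/
theorem stmt_11 [Fintype X] (rel : X → X → Prop) (H : X → ℝ)
    (hsymm : Symmetric rel) (hconn : ConnGraph rel)
    (A B : Set X) (hA : A.Nonempty) (hB : B.Nonempty) (hAB : Disjoint A B) :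
    ∃ C₁ C₂ : ℝ, 0 < C₁ ∧ C₁ ≤ C₂ ∧ ∀ β : ℝ, 0 < β →
      C₁ ≤ Real.exp (β * commHS rel H A B) * Zb H β * capB rel H β A B ∧
      Real.exp (β * commHS rel H A B) * Zb H β * capB rel H β A B ≤ C₂ := by
  obtain ⟨a, ha, b, hb, L, ω, hp, hΦ⟩ := exists_isPathW_pathMax_eq_commHS (H := H) hconn hA hB
  have : Nonempty X := ⟨a⟩
  have hL : 0 < L := Nat.pos_of_ne_zero (hp.length_ne_zero (hAB.ne_of_mem ha hb))
  obtain ⟨h₀, h₀01, h₀A, h₀B, h₀jump⟩ := exists_admissible_jumps_above (c := commHS rel H A B)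
    hsymm hAB fun a ha b hb L ω hp => (commHS_le_commH hconn ha hb).trans (commH_le_pathMax hp)
  have bounds : ∀ β : ℝ, 0 < β →
      1 / (2 * L ^ 2) ≤ Real.exp (β * commHS rel H A B) * Zb H β * capB rel H β A B ∧
      Real.exp (β * commHS rel H A B) * Zb H β * capB rel H β A B ≤ Fintype.card X ^ 2 / 2 :=
    fun β hβ =>
      ⟨le_mul_capB hAB (mul_pos (Real.exp_pos _) Zb_pos) fun h _ hA₁ hB₀ =>
          hΦ ▸ one_div_two_mul_sq_le_exp_mul_Zb_mul_dirE hβ.le hp (hA₁ a ha) (hB₀ b hb),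
        (mul_le_mul_of_nonneg_left (capB_le_dirE h₀01 h₀A h₀B)
          (mul_pos (Real.exp_pos _) Zb_pos).le).trans
          (exp_mul_Zb_mul_dirE_le hβ.le h₀01 h₀jump)⟩
  exact ⟨_, _, by positivity, (bounds 1 one_pos).1.trans (bounds 1 one_pos).2, bounds⟩
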